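/- Let r > 0, let K be a natural number, and let Ψ : ℝ × ℝ → ℝ. Let a₀, c₀ ∈ ℝ with c₀ ≠ 0, define a_{k+1} = Ψ(r, a_k) for 0 ≤ k ≤ K−1, and suppose Ψ is analytic at each point (r, a_k) for 0 ≤ k ≤ K−1, with the partial derivative ∂_vΨ(r, a_k) (the derivative of v ↦ Ψ(r, v) at a_k) nonzero for each such k. Let H₀ : ℝ → ℝ satisfy H₀(x) = a₀ − c₀·√(1 − x/r) + O(1 − x/r) as x → r⁻, and define H_{k+1}(x) = Ψ(x, H_k(x)). Then for each 0 ≤ k ≤ K, H_k(x) = a_k − c_k·√(1 − x/r) + O(1 − x/r) as x → r⁻, where c_k = c₀·∏_{j=0}^{k−1} ∂_vΨ(r, a_j), and c_k ≠ 0. -/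

import Mathlib

open Filter Asymptotics Topology

lemma taylor2 {E F : Type*} [NormedAddCommGroup E] [NormedSpace ℝ E]
    [NormedAddCommGroup F] [NormedSpace ℝ F]
    {f : E → F} {x : E} (hf : AnalyticAt ℝ f x) :
    (fun y => f (x + y) - f x - fderiv ℝ f x y) =O[nhds 0] fun y => ‖y‖ ^ 2 := by
  obtain ⟨p, hp⟩ := hf
  have h2 := hp.isBigO_sub_partialSum_pow 2
  refine h2.congr' (Eventually.of_forall fun y => ?_) EventuallyEq.rfl
  simp [FormalMultilinearSeries.partialSum, Finset.sum_range_succ, hp.coeff_zero,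
    hp.fderiv_eq]
  have hy1 : (![y] : Fin 1 → E) = fun _ => y := by
    ext i; fin_cases i; rfl
  rw [hy1]
  abel

theorem sqrt_singularity_propagation
    (r : ℝ) (hr : 0 < r) (K : ℕ)
    (Ψ : ℝ × ℝ → ℝ)
    (a : ℕ → ℝ) (c₀ : ℝ) (hc₀ : c₀ ≠ 0)
    (ha : ∀ k < K, a (k + 1) = Ψ (r, a k))
    (hΨa : ∀ k < K, AnalyticAt ℝ Ψ (r, a k))
    (hΨd : ∀ k < K, deriv (fun v => Ψ (r, v)) (a k) ≠ 0)
    (H : ℕ → ℝ → ℝ)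
    (hH0 : (fun x => H 0 x - a 0 + c₀ * Real.sqrt (1 - x / r)) =O[nhdsWithin r (Set.Iio r)]
      (fun x => 1 - x / r))
    (hHrec : ∀ k < K, ∀ x, H (k + 1) x = Ψ (x, H k x)) :
    ∀ k ≤ K,
      ((fun x => H k x - a k +
          (c₀ * ∏ j ∈ Finset.range k, deriv (fun v => Ψ (r, v)) (a j)) *
            Real.sqrt (1 - x / r)) =O[nhdsWithin r (Set.Iio r)] (fun x => 1 - x / r)) ∧
      c₀ * ∏ j ∈ Finset.range k, deriv (fun v => Ψ (r, v)) (a j) ≠ 0 := by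
  set l := nhdsWithin r (Set.Iio r) with hl
  set g : ℝ → ℝ := fun x => 1 - x / r with hg
  set s : ℝ → ℝ := fun x => Real.sqrt (1 - x / r) with hs
  -- basic facts
  have hxr : Tendsto (fun x : ℝ => x) l (𝓝 r) := tendsto_id.mono_right nhdsWithin_le_nhds
  have hgt : Tendsto g l (𝓝 0) := by
    have : Tendsto g (𝓝 r) (𝓝 (1 - r / r)) := by
      exact (continuous_const.sub (continuous_id.div_const r)).tendsto r
    rw [div_self hr.ne'] at this
    simpa [Function.comp_def] using this.comp hxr
  have hst : Tendsto s l (𝓝 0) := by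
    have := (Real.continuous_sqrt.tendsto 0).comp hgt
    simpa [Function.comp_def] using this
  have hsnn : ∀ᶠ x in l, 0 ≤ g x := by
    filter_upwards [self_mem_nhdsWithin] with x (hx : x < r)
    have : x / r < 1 := (div_lt_one hr).2 hx
    simp [hg]; linarith
  have hsq : ∀ᶠ x in l, s x ^ 2 = g x := by
    filter_upwards [hsnn] with x hx using Real.sq_sqrt hx
  have hgs : g =O[l] s := by
    rw [isBigO_iff]
    refine ⟨1, ?_⟩
    have hsmall : ∀ᶠ x in l, |s x| < 1 := by
      have h := hst.abs
      simp only [abs_zero] at h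
      exact h.eventually_lt_const one_pos
    filter_upwards [hsq, hsmall, hsnn] with x h1 h2 h3
    have hgx : g x = s x * s x := by rw [← h1]; ring
    simp only [Real.norm_eq_abs, hgx, one_mul, abs_mul]
    exact mul_le_of_le_one_left (abs_nonneg _) h2.le
  have hxr_O : (fun x : ℝ => x - r) =O[l] g := by
    have : (fun x : ℝ => x - r) = fun x => (-r) * g x := by
      funext x; show x - r = -r * (1 - x / r); linear_combination -(div_mul_cancel₀ x hr.ne')
    rw [this]
    exact (isBigO_refl g l).const_mul_left _
  have hs_O : s =O[l] s := isBigO_refl _ _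
  -- induction
  intro k hkK
  induction k with
  | zero =>
    refine ⟨?_, by simpa using hc₀⟩
    simpa using hH0
  | succ k ih =>
    have hk : k < K := hkK
    have hkK' : k ≤ K := hk.le
    obtain ⟨IH, hcne⟩ := ih hkK'
    set c : ℝ := c₀ * ∏ j ∈ Finset.range k, deriv (fun v => Ψ (r, v)) (a j) with hc
    set d : ℝ := deriv (fun v => Ψ (r, v)) (a k) with hd
    have hprod : c₀ * ∏ j ∈ Finset.range (k + 1), deriv (fun v => Ψ (r, v)) (a j) = c * d := by
      rw [Finset.prod_range_succ, hc, hd]; ring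
    have hA := hΨa k hk
    set L := fderiv ℝ Ψ (r, a k) with hL
    -- d = L (0, 1)
    have hder : HasDerivAt (fun v => Ψ (r, v)) (L (0, 1)) (a k) := by
      have h1 : HasDerivAt (fun v : ℝ => ((r : ℝ), v)) ((0 : ℝ), (1 : ℝ)) (a k) :=
        HasDerivAt.prodMk (hasDerivAt_const _ r) (hasDerivAt_id _)
      exact hA.differentiableAt.hasFDerivAt.comp_hasDerivAt _ h1
    have hdL : d = L (0, 1) := hder.deriv.symm ▸ rfl
    -- Taylor
    have hE := taylor2 hA
    set y : ℝ → ℝ × ℝ := fun x => (x - r, H k x - a k) with hy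
    have hHk_O_s : (fun x => H k x - a k) =O[l] s := by
      have h1 : (fun x => (H k x - a k + c * s x) - c * s x) =O[l] s :=
        (IH.trans hgs).sub (hs_O.const_mul_left c)
      refine h1.congr_left fun x => by ring
    have hy0 : Tendsto y l (𝓝 0) := by
      have h1 : Tendsto (fun x : ℝ => x - r) l (𝓝 0) := by
        simpa using hxr.sub_const r
      have h2 : Tendsto (fun x => H k x - a k) l (𝓝 0) := hHk_O_s.trans_tendsto hst
      exact h1.prodMk_nhds h2
    have hy_O_s : y =O[l] s := (hxr_O.trans hgs).prod_left hHk_O_s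
    have hEy : (fun x => Ψ ((r, a k) + y x) - Ψ (r, a k) - L (y x)) =O[l]
        (fun x => ‖y x‖ ^ 2) := hE.comp_tendsto hy0
    have hnorm : (fun x => ‖y x‖ ^ 2) =O[l] g := by
      have h1 : (fun x => ‖y x‖ ^ 2) =O[l] (fun x => s x ^ 2) := hy_O_s.norm_left.pow 2
      refine h1.trans ?_
      refine (isBigO_refl _ _).congr' EventuallyEq.rfl hsq
    have hEyg : (fun x => Ψ ((r, a k) + y x) - Ψ (r, a k) - L (y x)) =O[l] g :=
      hEy.trans hnorm
    have hsum : (fun x => (Ψ ((r, a k) + y x) - Ψ (r, a k) - L (y x))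
        + L (1, 0) * (x - r) + d * (H k x - a k + c * s x)) =O[l] g :=
      (hEyg.add (hxr_O.const_mul_left _)).add (IH.const_mul_left d)
    refine ⟨?_, hprod ▸ mul_ne_zero hcne (hΨd k hk)⟩
    rw [hprod]
    refine hsum.congr_left fun x => ?_
    have hpt : (r, a k) + y x = (x, H k x) := by
      simp [hy, Prod.mk_add_mk]
    have hLy : L (y x) = (x - r) * L (1, 0) + (H k x - a k) * L (0, 1) := by
      have : y x = (x - r) • ((1 : ℝ), (0 : ℝ)) + (H k x - a k) • ((0 : ℝ), (1 : ℝ)) := by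
        simp [hy, Prod.smul_mk, Prod.mk_add_mk]
      rw [this, map_add, map_smul, map_smul, smul_eq_mul, smul_eq_mul]
    rw [hpt, hLy, hHrec k hk x, ha k hk, hdL]
    ring
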